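/- As formal power series in q^{1/2}, the character of the irreducible Virasoro module M(1/2, 1/2) satisfies: ch_q M(1/2, 1/2) = (1/∏_{i=1}^∞ (1 - q^{2i})) · ∑_{n ∈ ℤ, n odd} q^{n² + n/2}, where ch_q M(1/2, 1/2) is defined combinatorially as ∑_k q^k · (number of partitions of k into an odd number of distinct parts from {1/2, 3/2, 5/2, ...}). -/

import Mathlib

open PowerSeries

/-- `P` is the limit of the partial products of `f` in the formal power series topology. -/
def PSHasProd {R : Type*} [CommRing R] (f : ℕ → PowerSeries R) (P : PowerSeries R) : Prop :=
  ∀ N : ℕ, ∃ M : ℕ, ∀ m ≥ M,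
    PowerSeries.trunc N (∏ i ∈ Finset.range m, f i) = PowerSeries.trunc N P

/-- `S` is the limit over finite subsets of `ℤ` of the partial sums of `g` in the
formal power series topology. -/
def PSHasSumZ {R : Type*} [CommRing R] (g : ℤ → PowerSeries R) (S : PowerSeries R) : Prop :=
  ∀ N : ℕ, ∃ A : Finset ℤ, ∀ B : Finset ℤ, A ⊆ B →
    PowerSeries.trunc N (∑ n ∈ B, g n) = PowerSeries.trunc N S

/-!
Put `t = q^{1/2} = X`. Expanding `∏_{j<J} (1 ± t^{2j+1})` over subsets of `{0, …, J-1}` shows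
that half the difference of the two products is the generating series of odd-size sets, which
agrees with the character below degree `J`. For `J = 2M` the product is the finite Jacobi triple
product `∑_{|n| ≤ M} (±1)^n [2M, M+n]_{q²} t^{2n²+n}`, proved by induction on `M` from a
two-step `q`-Pascal recurrence. Modulo `t^N` with `M ≥ 2N`, multiplying by `∏_{i<N} (1 - q^{2i})`
turns every Gaussian binomial whose monomial `t^{2n²+n}` survives into `1`, which leaves the
truncated theta series `∑_{n odd} t^{2n²+n}`.
-/

open Finset

noncomputable section

theorem prod_range_two_mul {M : Type*} [CommMonoid M] (f : ℕ → M) (n : ℕ) :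
    ∏ j ∈ range (2 * n), f j = ∏ m ∈ range n, (f (2 * m) * f (2 * m + 1)) := by
  induction n with
  | zero => simp
  | succ n ih =>
    rw [show 2 * (n + 1) = 2 * n + 1 + 1 by ring, prod_range_succ, prod_range_succ,
      prod_range_succ, ih, mul_assoc]

theorem prod_one_add_C_mul_X_pow {R ι : Type*} [CommRing R] (ε : R) (s : Finset ι) (e : ι → ℕ) :
    ∏ i ∈ s, (1 + C ε * X ^ e i) = ∑ t ∈ s.powerset, C (ε ^ #t) * X ^ (∑ i ∈ t, e i) := by
  rw [prod_one_add]
  refine sum_congr rfl fun t _ => ?_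
  rw [prod_mul_distrib, prod_const, map_pow, prod_pow_eq_pow_sum]

theorem sum_comp_add_eq_sum {M : Type*} [AddCommMonoid M] {f : ℤ → M} {s : Finset ℤ} (c : ℤ)
    (hf : ∀ n ∉ s, f n = 0) (hfc : ∀ n ∉ s, f (n + c) = 0) :
    ∑ n ∈ s, f (n + c) = ∑ n ∈ s, f n := by
  rw [← finsum_eq_sum_of_support_subset f (Function.support_subset_iff'.mpr hf),
    ← finsum_eq_sum_of_support_subset _ (Function.support_subset_iff'.mpr hfc)]
  exact finsum_comp_equiv (Equiv.addRight c)

theorem two_mul_sq_add_self_nonneg (n : ℤ) : 0 ≤ 2 * n ^ 2 + n := by nlinarith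

theorem natAbs_le_toNat_two_mul_sq_add_self (n : ℤ) : n.natAbs ≤ (2 * n ^ 2 + n).toNat := by
  rcases le_or_gt 0 n with h | h
  · have : n ≤ 2 * n ^ 2 + n := by nlinarith
    omega
  · have : -n ≤ 2 * n ^ 2 + n := by nlinarith
    omega

section Truncation

variable {R : Type*} [CommRing R] {N : ℕ} {f g : R⟦X⟧}

theorem smodEq_X_pow_iff_coeff :
    f ≡ g [SMOD Ideal.span {(X : R⟦X⟧) ^ N}] ↔ ∀ m < N, coeff m f = coeff m g := by
  simp only [SModEq.sub_mem, Ideal.mem_span_singleton, X_pow_dvd_iff, map_sub, sub_eq_zero]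

theorem smodEq_X_pow_iff_trunc :
    f ≡ g [SMOD Ideal.span {(X : R⟦X⟧) ^ N}] ↔ trunc N f = trunc N g := by
  simp only [smodEq_X_pow_iff_coeff, Polynomial.ext_iff, coeff_trunc]
  refine ⟨fun h m => ?_, fun h m hm => by simpa [hm] using h m⟩
  split_ifs with hm
  exacts [h m hm, rfl]

theorem X_pow_smodEq_zero {e : ℕ} (h : N ≤ e) : (X : R⟦X⟧) ^ e ≡ 0 [SMOD Ideal.span {X ^ N}] :=
  SModEq.zero.mpr (Ideal.mem_span_singleton.mpr (pow_dvd_pow X h))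

theorem smodEq_sum_of_PSHasSumZ {u : ℤ → R⟦X⟧} {S : R⟦X⟧} (hS : PSHasSumZ u S) (s : Finset ℤ)
    (hs : ∀ n ∉ s, u n ≡ 0 [SMOD Ideal.span {X ^ N}]) :
    S ≡ ∑ n ∈ s, u n [SMOD Ideal.span {X ^ N}] := by
  classical
  obtain ⟨A, hA⟩ := hS N
  have hsum := smodEq_X_pow_iff_trunc.mpr (hA (A ∪ s) subset_union_left)
  rw [← sum_sdiff (subset_union_right (s₁ := A))] at hsum
  have hrest : ∑ n ∈ (A ∪ s) \ s, u n ≡ 0 [SMOD Ideal.span {X ^ N}] := by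
    rw [← sum_const_zero (s := (A ∪ s) \ s)]
    exact SModEq.sum fun n hn => hs n (mem_sdiff.mp hn).2
  simpa using hsum.symm.trans (hrest.add SModEq.rfl)

end Truncation

variable {k : Type*} [Field k]

theorem inv_smodEq_inv {I : Ideal k⟦X⟧} {f g : k⟦X⟧} (h : f ≡ g [SMOD I])
    (hf : constantCoeff f ≠ 0) (hg : constantCoeff g ≠ 0) : f⁻¹ ≡ g⁻¹ [SMOD I] :=
  calc f⁻¹ = f⁻¹ * g * g⁻¹ := by rw [mul_assoc, PowerSeries.mul_inv_cancel g hg, mul_one]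
    _ ≡ f⁻¹ * f * g⁻¹ [SMOD I] := (SModEq.rfl.mul h.symm).mul SModEq.rfl
    _ = g⁻¹ := by rw [PowerSeries.inv_mul_cancel f hf, one_mul]

def qPoch (s : ℕ) : k⟦X⟧ := ∏ i ∈ range s, (1 - X ^ (4 * (i + 1)))

theorem constantCoeff_qPoch (s : ℕ) : constantCoeff (qPoch s : k⟦X⟧) = 1 := by
  simp [qPoch, map_prod]

theorem qPoch_succ (s : ℕ) : (qPoch (s + 1) : k⟦X⟧) = qPoch s * (1 - X ^ (4 * (s + 1))) :=
  prod_range_succ _ _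

theorem qPoch_mul_inv (s : ℕ) : (qPoch s : k⟦X⟧) * (qPoch s)⁻¹ = 1 :=
  PowerSeries.mul_inv_cancel _ (by simp [constantCoeff_qPoch])

/-- Extended by zero to negative arguments, so that `gaussBinom M n` vanishes for `|n| > M` and
`gaussBinom_succ` holds for every `n`. -/
def qPochInv (j : ℤ) : k⟦X⟧ := if 0 ≤ j then (qPoch j.toNat)⁻¹ else 0

theorem qPochInv_natCast (s : ℕ) : (qPochInv s : k⟦X⟧) = (qPoch s)⁻¹ := by
  simp [qPochInv]

theorem qPochInv_of_neg {j : ℤ} (hj : j < 0) : (qPochInv j : k⟦X⟧) = 0 := by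
  simp [qPochInv, hj.not_ge]

theorem qPochInv_sub_one (j : ℤ) :
    (qPochInv (j - 1) : k⟦X⟧) = qPochInv j * (1 - X ^ (4 * j.toNat)) := by
  rcases lt_trichotomy j 0 with hj | rfl | hj
  · rw [qPochInv_of_neg (by omega), qPochInv_of_neg hj, zero_mul]
  · simp [qPochInv_of_neg]
  · lift j to ℕ using hj.le
    rw [show (j : ℤ) - 1 = (j - 1 : ℕ) by omega, qPochInv_natCast, qPochInv_natCast,
      Int.toNat_natCast, ← Nat.sub_add_cancel (show 1 ≤ j by omega), Nat.add_sub_cancel,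
      qPoch_succ, PowerSeries.mul_inv_rev, mul_right_comm,
      PowerSeries.inv_mul_cancel _ (by simp), one_mul]

/-- The Gaussian binomial coefficient `[2M, M+n]` in the variable `X⁴`. -/
def gaussBinom (M : ℕ) (n : ℤ) : k⟦X⟧ := qPoch (2 * M) * qPochInv (M + n) * qPochInv (M - n)

theorem gaussBinom_eq_zero {M : ℕ} {n : ℤ} (hn : n ∉ Icc (-(M : ℤ)) M) :
    (gaussBinom M n : k⟦X⟧) = 0 := by
  rw [mem_Icc, not_and_or, not_le, not_le] at hn
  rcases hn with hn | hn
  · rw [gaussBinom, qPochInv_of_neg (j := M + n) (by omega), mul_zero, zero_mul]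
  · rw [gaussBinom, qPochInv_of_neg (j := M - n) (by omega), mul_zero]

theorem gaussBinom_succ (M : ℕ) (n : ℤ) :
    (gaussBinom (M + 1) n : k⟦X⟧)
      = gaussBinom M n * (1 + X ^ (4 * (2 * M + 1)))
        + gaussBinom M (n - 1) * X ^ (4 * (M + 1 - n).toNat)
        + gaussBinom M (n + 1) * X ^ (4 * (M + 1 + n).toNat) := by
  set a : ℤ := M + 1 + n
  set b : ℤ := M + 1 - n
  have hab : a + b = 2 * M + 2 := by ring
  simp only [gaussBinom]
  -- express all six reciprocal factors through `qPochInv a` and `qPochInv b`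
  rw [show ((M + 1 : ℕ) : ℤ) + n = a by push_cast; ring,
    show ((M + 1 : ℕ) : ℤ) - n = b by push_cast; ring,
    show (M : ℤ) + n = a - 1 by ring, show (M : ℤ) - n = b - 1 by ring,
    show (M : ℤ) + (n - 1) = a - 1 - 1 by ring, show (M : ℤ) - (n - 1) = b by ring,
    show (M : ℤ) + (n + 1) = a by ring, show (M : ℤ) - (n + 1) = b - 1 - 1 by ring,
    qPochInv_sub_one (a - 1), qPochInv_sub_one a, qPochInv_sub_one (b - 1), qPochInv_sub_one b,
    show 2 * (M + 1) = 2 * M + 1 + 1 by ring, qPoch_succ, qPoch_succ]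
  rcases lt_or_ge a 0 with ha | ha
  · simp [qPochInv_of_neg ha]
  rcases lt_or_ge b 0 with hb | hb
  · simp [qPochInv_of_neg hb]
  clear_value a b
  lift a to ℕ using ha
  lift b to ℕ using hb
  have toNat_sub_one (m : ℕ) : ((m : ℤ) - 1).toNat = m - 1 := by omega
  simp only [Int.toNat_natCast, toNat_sub_one, pow_mul]
  rcases a with _ | a
  · obtain rfl : b = 2 * M + 1 + 1 := by omega
    simp only [pow_zero, sub_self, Nat.add_sub_cancel]
    ring
  rcases b with _ | b
  · obtain rfl : a = 2 * M + 1 := by omega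
    simp only [pow_zero, sub_self, Nat.add_sub_cancel]
    ring
  rw [show 2 * M = a + b by omega]
  simp only [Nat.add_sub_cancel]
  ring

theorem jacobi_summand_succ {ε : k} (hε : ε ≠ 0) (M : ℕ) {n : ℤ}
    (hn : n ∈ Icc (-(M + 1 : ℤ)) (M + 1)) :
    C (ε ^ n) * gaussBinom (M + 1) n * X ^ (2 * n ^ 2 + n).toNat
      = C (ε ^ n) * gaussBinom M n * X ^ (2 * n ^ 2 + n).toNat * (1 + X ^ (4 * (2 * M + 1)))
        + C (ε ^ (n - 1)) * gaussBinom M (n - 1) * X ^ (2 * (n - 1) ^ 2 + (n - 1)).toNat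
          * (C ε * X ^ (4 * M + 3))
        + C (ε ^ (n + 1)) * gaussBinom M (n + 1) * X ^ (2 * (n + 1) ^ 2 + (n + 1)).toNat
          * (C ε⁻¹ * X ^ (4 * M + 1)) := by
  rw [mem_Icc] at hn
  have := two_mul_sq_add_self_nonneg n
  have := two_mul_sq_add_self_nonneg (n - 1)
  have := two_mul_sq_add_self_nonneg (n + 1)
  have : 2 * (n - 1) ^ 2 + (n - 1) = 2 * n ^ 2 + n - 4 * n + 1 := by ring
  have : 2 * (n + 1) ^ 2 + (n + 1) = 2 * n ^ 2 + n + 4 * n + 3 := by ring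
  have xsub : (X : k⟦X⟧) ^ (2 * (n - 1) ^ 2 + (n - 1)).toNat * X ^ (4 * M + 3)
      = X ^ (4 * (M + 1 - n).toNat) * X ^ (2 * n ^ 2 + n).toNat := by
    rw [← pow_add, ← pow_add]; congr 1; omega
  have xadd : (X : k⟦X⟧) ^ (2 * (n + 1) ^ 2 + (n + 1)).toNat * X ^ (4 * M + 1)
      = X ^ (4 * (M + 1 + n).toNat) * X ^ (2 * n ^ 2 + n).toNat := by
    rw [← pow_add, ← pow_add]; congr 1; omega
  have csub : C (ε ^ (n - 1)) * C ε = C (ε ^ n) := by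
    rw [← map_mul, zpow_sub_one₀ hε, inv_mul_cancel_right₀ hε]
  have cadd : C (ε ^ (n + 1)) * C ε⁻¹ = C (ε ^ n) := by
    rw [← map_mul, zpow_add_one₀ hε, mul_inv_cancel_right₀ hε]
  rw [gaussBinom_succ]
  linear_combination
    -(gaussBinom M (n - 1) * X ^ (2 * (n - 1) ^ 2 + (n - 1)).toNat * X ^ (4 * M + 3)) * csub
    - (C (ε ^ n) * gaussBinom M (n - 1)) * xsub
    - (gaussBinom M (n + 1) * X ^ (2 * (n + 1) ^ 2 + (n + 1)).toNat * X ^ (4 * M + 1)) * cadd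
    - (C (ε ^ n) * gaussBinom M (n + 1)) * xadd

theorem finite_jacobi_triple_product {ε : k} (hε : ε ≠ 0) (M : ℕ) :
    ∏ m ∈ range M, ((1 + C ε⁻¹ * X ^ (4 * m + 1)) * (1 + C ε * X ^ (4 * m + 3)))
      = ∑ n ∈ Icc (-(M : ℤ)) M, C (ε ^ n) * gaussBinom M n * X ^ (2 * n ^ 2 + n).toNat := by
  induction M with
  | zero => simp [gaussBinom, qPoch, qPochInv]
  | succ M ih =>
    set T : ℤ → k⟦X⟧ := fun n => C (ε ^ n) * gaussBinom M n * X ^ (2 * n ^ 2 + n).toNat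
    have hT : ∀ n ∉ Icc (-(M : ℤ)) M, T n = 0 := fun n hn => by
      simp only [T, gaussBinom_eq_zero hn, mul_zero, zero_mul]
    have hcancel : (C ε⁻¹ : k⟦X⟧) * C ε = 1 := by rw [← map_mul, inv_mul_cancel₀ hε, map_one]
    let s := Icc (-(M + 1 : ℤ)) (M + 1)
    have hsum : ∑ n ∈ Icc (-(M : ℤ)) M, T n = ∑ n ∈ s, T n :=
      sum_subset (Icc_subset_Icc (by omega) (by omega)) fun n _ hn => hT n hn
    have hshift (c : ℤ) (hc : c ∈ Icc (-1 : ℤ) 1) (B : k⟦X⟧) :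
        ∑ n ∈ s, T (n + c) * B = ∑ n ∈ s, T n * B := by
      refine sum_comp_add_eq_sum (f := fun n => T n * B) c (fun n hn => ?_) (fun n hn => ?_)
      all_goals
        simp only [s, mem_Icc] at hn hc
        rw [hT _ (by simp only [mem_Icc]; omega), zero_mul]
    rw [prod_range_succ, ih, hsum, sum_mul, Nat.cast_succ]
    calc ∑ n ∈ s, T n * ((1 + C ε⁻¹ * X ^ (4 * M + 1)) * (1 + C ε * X ^ (4 * M + 3)))
        = ∑ n ∈ s, (T n * (1 + X ^ (4 * (2 * M + 1))) + T n * (C ε * X ^ (4 * M + 3))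
            + T n * (C ε⁻¹ * X ^ (4 * M + 1))) := by
          refine sum_congr rfl fun n _ => ?_
          linear_combination (T n * X ^ (4 * M + 1) * X ^ (4 * M + 3)) * hcancel
      _ = ∑ n ∈ s, (T n * (1 + X ^ (4 * (2 * M + 1))) + T (n + -1) * (C ε * X ^ (4 * M + 3))
            + T (n + 1) * (C ε⁻¹ * X ^ (4 * M + 1))) := by
          simp only [sum_add_distrib, hshift (-1) (by simp), hshift 1 (by simp)]
      _ = _ := by
          refine sum_congr rfl fun n hn => ?_
          rw [jacobi_summand_succ hε M hn, ← sub_eq_add_neg]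

theorem prod_range_two_mul_eq_sum_gaussBinom {ε : k} (hε : ε * ε = 1) (M : ℕ) :
    ∏ j ∈ range (2 * M), (1 + C ε * X ^ (2 * j + 1))
      = ∑ n ∈ Icc (-(M : ℤ)) M, C (ε ^ n) * gaussBinom M n * X ^ (2 * n ^ 2 + n).toNat := by
  rw [prod_range_two_mul, ← finite_jacobi_triple_product (left_ne_zero_of_mul_eq_one hε),
    inv_eq_of_mul_eq_one_right hε]
  refine prod_congr rfl fun m _ => ?_
  ring_nf

def oddSubsetSeries (R : Type*) [CommRing R] (J : ℕ) : R⟦X⟧ :=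
  ∑ A ∈ (range J).powerset with Odd #A, X ^ (∑ j ∈ A, (2 * j + 1))

theorem prod_sub_prod_eq_two_mul_oddSubsetSeries {R : Type*} [CommRing R] (J : ℕ) :
    ∏ j ∈ range J, (1 + C 1 * X ^ (2 * j + 1)) - ∏ j ∈ range J, (1 + C (-1) * X ^ (2 * j + 1))
      = 2 * oddSubsetSeries R J := by
  rw [prod_one_add_C_mul_X_pow, prod_one_add_C_mul_X_pow, ← sum_sub_distrib, oddSubsetSeries,
    sum_filter, mul_sum]
  refine sum_congr rfl fun t _ => ?_
  rcases Nat.even_or_odd #t with ht | ht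
  · simp [ht.neg_one_pow, Nat.not_odd_iff_even.mpr ht]
  · simp [ht.neg_one_pow, ht]
    ring

theorem oddSubsetSeries_two_mul_eq_sum [CharZero k] (M : ℕ) :
    oddSubsetSeries k (2 * M)
      = ∑ n ∈ Icc (-(M : ℤ)) M with Odd n, gaussBinom M n * X ^ (2 * n ^ 2 + n).toNat := by
  have htwo : (2 : k⟦X⟧) ≠ 0 := fun h =>
    two_ne_zero (α := k) (by simpa [map_ofNat] using congrArg constantCoeff h)
  refine mul_left_cancel₀ htwo ?_
  rw [← prod_sub_prod_eq_two_mul_oddSubsetSeries,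
    prod_range_two_mul_eq_sum_gaussBinom (mul_one 1),
    prod_range_two_mul_eq_sum_gaussBinom (by norm_num : (-1 : k) * -1 = 1),
    ← sum_sub_distrib, sum_filter, mul_sum]
  refine sum_congr rfl fun n _ => ?_
  rcases Int.even_or_odd n with hn | hn
  · simp [hn.neg_one_zpow, Int.not_odd_iff_even.mpr hn]
  · simp [hn.neg_one_zpow, hn]
    ring

theorem qPoch_smodEq {N s : ℕ} (h : N ≤ s) :
    (qPoch s : k⟦X⟧) ≡ qPoch N [SMOD Ideal.span {X ^ N}] := by
  rw [qPoch, ← prod_range_mul_prod_Ico _ h]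
  conv_rhs => rw [← mul_one (qPoch N)]
  refine SModEq.rfl.mul ?_
  simpa using SModEq.prod fun i (hi : i ∈ Ico N s) =>
    (SModEq.rfl (x := (1 : k⟦X⟧))).sub (X_pow_smodEq_zero (by simp at hi; omega))

theorem qPochInv_smodEq {N : ℕ} {j : ℤ} (h : N ≤ j) :
    (qPochInv j : k⟦X⟧) ≡ (qPoch N)⁻¹ [SMOD Ideal.span {X ^ N}] := by
  lift j to ℕ using (by omega)
  rw [qPochInv_natCast]
  exact inv_smodEq_inv (qPoch_smodEq (by omega)) (by simp [constantCoeff_qPoch])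
    (by simp [constantCoeff_qPoch])

theorem qPoch_mul_gaussBinom_smodEq_one {N M : ℕ} {n : ℤ} (h₁ : N ≤ M + n) (h₂ : N ≤ M - n) :
    qPoch N * (gaussBinom M n : k⟦X⟧) ≡ 1 [SMOD Ideal.span {X ^ N}] := by
  have h := ((qPoch_smodEq (k := k) (s := 2 * M) (by omega)).mul (qPochInv_smodEq h₁)).mul
    (qPochInv_smodEq h₂) |> (SModEq.rfl (x := qPoch N)).mul
  have hcancel : (qPoch N : k⟦X⟧) * (qPoch N * (qPoch N)⁻¹ * (qPoch N)⁻¹) = 1 := by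
    rw [qPoch_mul_inv, one_mul, qPoch_mul_inv]
  rwa [gaussBinom, ← hcancel]

theorem qPoch_mul_gaussBinom_mul_X_pow_smodEq {N M : ℕ} (hM : 2 * N ≤ M) (n : ℤ) :
    qPoch N * ((gaussBinom M n : k⟦X⟧) * X ^ (2 * n ^ 2 + n).toNat)
      ≡ X ^ (2 * n ^ 2 + n).toNat [SMOD Ideal.span {X ^ N}] := by
  have habs := natAbs_le_toNat_two_mul_sq_add_self n
  rw [← mul_assoc]
  rcases le_or_gt n.natAbs N with hn | hn
  · simpa using (qPoch_mul_gaussBinom_smodEq_one (k := k) (N := N) (M := M) (n := n) (by omega)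
      (by omega)).mul (SModEq.rfl (x := (X : k⟦X⟧) ^ (2 * n ^ 2 + n).toNat))
  · have hX := X_pow_smodEq_zero (R := k) (N := N) (e := (2 * n ^ 2 + n).toNat) (by omega)
    have h := (SModEq.rfl (x := qPoch N * (gaussBinom M n : k⟦X⟧))).mul hX
    rw [mul_zero] at h
    exact h.trans hX.symm

theorem smodEq_qPoch_of_PSHasProd {P : k⟦X⟧}
    (hP : PSHasProd (fun i => 1 - (X : k⟦X⟧) ^ (4 * (i + 1))) P) (N : ℕ) :
    P ≡ qPoch N [SMOD Ideal.span {X ^ N}] := by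
  obtain ⟨M, hM⟩ := hP N
  exact (smodEq_X_pow_iff_trunc.mpr (hM (max M N) (le_max_left _ _))).symm.trans
    (qPoch_smodEq (le_max_right _ _))

theorem smodEq_sum_Icc_of_PSHasSumZ {R : Type*} [CommRing R] {S : R⟦X⟧} {N M : ℕ}
    (hS : PSHasSumZ (fun n => if Odd n then (X : R⟦X⟧) ^ (2 * n ^ 2 + n).toNat else 0) S)
    (hNM : N ≤ M) :
    S ≡ ∑ n ∈ Icc (-(M : ℤ)) M with Odd n, X ^ (2 * n ^ 2 + n).toNat
      [SMOD Ideal.span {X ^ N}] := by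
  rw [sum_filter]
  refine smodEq_sum_of_PSHasSumZ hS _ fun n hn => ?_
  have := natAbs_le_toNat_two_mul_sq_add_self n
  rw [mem_Icc] at hn
  split_ifs
  exacts [X_pow_smodEq_zero (by omega), SModEq.rfl]

theorem mem_powerset_range_of_sum_lt {A : Finset ℕ} {J : ℕ} (h : ∑ j ∈ A, (2 * j + 1) < J) :
    A ∈ (range J).powerset := by
  refine mem_powerset.mpr fun j hj => mem_range.mpr ?_
  have := single_le_sum (f := fun j => 2 * j + 1) (fun _ _ => Nat.zero_le _) hj
  omega

theorem mk_card_smodEq_oddSubsetSeries {R : Type*} [CommRing R] {N J : ℕ} (h : N ≤ J) :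
    PowerSeries.mk (fun m =>
        (Nat.card {A : Finset ℕ | ∑ j ∈ A, (2 * j + 1) = m ∧ Odd A.card} : R))
      ≡ oddSubsetSeries R J [SMOD Ideal.span {X ^ N}] := by
  classical
  refine smodEq_X_pow_iff_coeff.mpr fun m hm => ?_
  have hset : {A : Finset ℕ | ∑ j ∈ A, (2 * j + 1) = m ∧ Odd A.card}
      = ↑{A ∈ (range J).powerset | Odd #A ∧ ∑ j ∈ A, (2 * j + 1) = m} := by
    ext A
    simp only [coe_filter]
    exact ⟨fun ⟨hsum, hodd⟩ => ⟨mem_powerset_range_of_sum_lt (by omega), hodd, hsum⟩,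
      fun ⟨_, hodd, hsum⟩ => ⟨hsum, hodd⟩⟩
  rw [coeff_mk, hset, Nat.card_coe_set_eq, Set.ncard_coe_finset, oddSubsetSeries, map_sum,
    ← filter_filter, ← sum_boole]
  simp only [coeff_X_pow, eq_comm]

end

/-- The character of `M(1/2, 1/2)`: in the variable `t = q^{1/2}`, the generating series
`∑_k (number of partitions of k into an odd number of distinct half-odd parts) q^k`
(a part `(2j+1)/2` is encoded by `j : ℕ` and contributes `t^{2j+1}`, so the coefficient of `t^m`
counts sets `A` with `∑_{j∈A} (2j+1) = m` of odd cardinality) equals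
`(1/∏_{i≥1}(1 - q^{2i})) · ∑_{n odd} q^{n² + n/2}`, where `q^{a/2} = t^a`. -/
theorem character_M_half_half (P S : PowerSeries ℚ)
    (hP : PSHasProd (fun i => 1 - (PowerSeries.X : PowerSeries ℚ) ^ (4 * (i + 1))) P)
    (hS : PSHasSumZ (fun n => if Odd n then
      (PowerSeries.X : PowerSeries ℚ) ^ (2 * n ^ 2 + n).toNat else 0) S) :
    PowerSeries.mk (fun m =>
        (Nat.card {A : Finset ℕ | ∑ j ∈ A, (2 * j + 1) = m ∧ Odd A.card} : ℚ))
      = P⁻¹ * S := by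
  set F : ℚ⟦X⟧ := PowerSeries.mk fun m =>
    (Nat.card {A : Finset ℕ | ∑ j ∈ A, (2 * j + 1) = m ∧ Odd A.card} : ℚ)
  have hP₀ : constantCoeff P ≠ 0 := by
    have := smodEq_X_pow_iff_coeff.mp (smodEq_qPoch_of_PSHasProd hP 1) 0 one_pos
    rw [← coeff_zero_eq_constantCoeff_apply, this, coeff_zero_eq_constantCoeff_apply,
      constantCoeff_qPoch]
    exact one_ne_zero
  have key (N : ℕ) : P * F ≡ S [SMOD Ideal.span {X ^ N}] := by
    have hPF := (smodEq_qPoch_of_PSHasProd hP N).mul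
      (mk_card_smodEq_oddSubsetSeries (R := ℚ) (J := 2 * (2 * N)) (by omega))
    rw [oddSubsetSeries_two_mul_eq_sum, mul_sum] at hPF
    exact (hPF.trans (SModEq.sum fun n _ => qPoch_mul_gaussBinom_mul_X_pow_smodEq le_rfl n)).trans
      (smodEq_sum_Icc_of_PSHasSumZ hS (by omega)).symm
  have hPF : P * F = S := by
    ext d
    exact smodEq_X_pow_iff_coeff.mp (key (d + 1)) d d.lt_succ_self
  rw [← hPF, ← mul_assoc, PowerSeries.inv_mul_cancel P hP₀, one_mul]
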